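/- arXiv:2006.05326 — 5 statements merged into one kernel-verified Lean document; each statement's English description precedes it below -/
import Mathlib

section
/- Let S be a generalized quadrangle, S' a full subquadrangle of S, and x a point of S not in S'. Then the set O_x of points of S' collinear with x is an ovoid of S' (i.e., every line of S' is incident with exactly one point of O_x). -/
/-- Two points are collinear if they are incident with a common line. -/
def Collin {P L : Type} (inc : P → L → Prop) (x y : P) : Prop :=
  ∃ M, inc x M ∧ inc y M

/-- `inc` is the incidence relation of a generalized quadrangle:
two distinct points lie on at most one common line, for every non-incident
point-line pair `(x,l)` there is a unique point of `l` collinear with `x`,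
and (from the order axiom) every point is on a line and every line has a point. -/
def IsGQ {P L : Type} (inc : P → L → Prop) : Prop :=
  (∀ p q : P, ∀ l m : L, p ≠ q → inc p l → inc q l → inc p m → inc q m → l = m) ∧
  (∀ (x : P) (l : L), ¬ inc x l → ∃! y : P, inc y l ∧ Collin inc x y) ∧
  (∀ p : P, ∃ l, inc p l) ∧ (∀ l : L, ∃ p, inc p l)

/-- The incidence relation of the subgeometry induced on a set of points and
a set of lines. -/
def Rinc {P L : Type} (inc : P → L → Prop) (SP : Set P) (SL : Set L) :
    ↥SP → ↥SL → Prop :=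
  fun p l => inc p.1 l.1

/-- The subgeometry `(SP, SL)` is full: every point of the ambient geometry
incident with one of its lines belongs to it. -/
def IsFull {P L : Type} (inc : P → L → Prop) (SP : Set P) (SL : Set L) : Prop :=
  ∀ l ∈ SL, ∀ p, inc p l → p ∈ SP

/-- A set of points is an ovoid: every line is incident with exactly one of its
points. -/
def IsOvoid {P L : Type} (inc : P → L → Prop) (O : Set P) : Prop :=
  ∀ l : L, ∃! p, p ∈ O ∧ inc p l

/-- if `S'=(SP,SL)` is a full subquadrangle of the generalized
quadrangle `S` and `x` is a point of `S` not in `S'`, then the set `O_x` of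
points of `S'` collinear with `x` is an ovoid of `S'`. -/
theorem subtended_is_ovoid {P L : Type} (inc : P → L → Prop)
    (SP : Set P) (SL : Set L)
    (hGQ : IsGQ inc) (hsub : IsGQ (Rinc inc SP SL))
    (hfull : IsFull inc SP SL)
    (x : P) (hx : x ∉ SP) :
    IsOvoid (Rinc inc SP SL) {p : ↥SP | Collin inc x p.1} := by
  intro l
  have hnx : ¬ inc x l.1 := fun h => hx (hfull l.1 l.2 x h)
  obtain ⟨y, ⟨hyl, hyc⟩, huniq⟩ := hGQ.2.1 x l.1 hnx
  have hySP : y ∈ SP := hfull l.1 l.2 y hyl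
  refine ⟨⟨y, hySP⟩, ⟨hyc, hyl⟩, ?_⟩
  rintro ⟨p, hp⟩ ⟨hpc, hpl⟩
  exact Subtype.ext (huniq p ⟨hpl, hpc⟩)
end

section
/- Let Γ be a thick generalized quadrangle with an ovoid O, and let Γ' be a subquadrangle of Γ (with induced incidence) whose point set contains O. Then Γ' = Γ, i.e., Γ' contains all points and all lines of Γ. -/
/-- A geometry is thick if every point is incident with at least 3 lines and
every line is incident with at least 3 points. -/
def Thick {P L : Type} (inc : P → L → Prop) : Prop :=
  (∀ p : P, ∃ l m n : L, l ≠ m ∧ l ≠ n ∧ m ≠ n ∧ inc p l ∧ inc p m ∧ inc p n) ∧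
  (∀ l : L, ∃ p q r : P, p ≠ q ∧ p ≠ r ∧ q ≠ r ∧ inc p l ∧ inc q l ∧ inc r l)

set_option maxHeartbeats 1000000 in
/-- a subquadrangle `Γ' = (SP, SL)` of a thick generalized
quadrangle `Γ` whose point set contains an ovoid `O` of `Γ` equals `Γ`. -/
theorem subGQ_containing_ovoid_is_whole {P L : Type} (inc : P → L → Prop)
    (hGQ : IsGQ inc) (hthick : Thick inc)
    (O : Set P) (hO : IsOvoid inc O)
    (SP : Set P) (SL : Set L)
    (hsub : IsGQ (Rinc inc SP SL))
    (hOsub : O ⊆ SP) :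
    SP = Set.univ ∧ SL = Set.univ := by

  obtain ⟨huniq_line, hproj, hptline, hlinept⟩ := hGQ
  -- Claim: the projection of an ovoid point onto a sub-line is a sub-point,
  -- joined by a sub-line.
  have projSP : ∀ o' ∈ O, ∀ m ∈ SL, ¬ inc o' m → ∀ z, inc z m → Collin inc o' z →
      z ∈ SP ∧ ∃ n ∈ SL, inc o' n ∧ inc z n := by
    intro o' ho' m hm hno z hzm hcol
    obtain ⟨y, ⟨hym, ⟨M, hoM, hyM⟩⟩, _⟩ :=
      hsub.2.1 ⟨o', hOsub ho'⟩ ⟨m, hm⟩ (show ¬ inc o' m from hno)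
    obtain ⟨w, _, hwu⟩ := hproj o' m hno
    have h1 : z = w := hwu z ⟨hzm, hcol⟩
    have h2 : (y : P) = w := hwu y ⟨hym, ⟨M.1, hoM, hyM⟩⟩
    have hz : z = (y : P) := h1.trans h2.symm
    refine ⟨hz ▸ y.2, M.1, M.2, hoM, hz ▸ hyM⟩
  -- Fullness
  have full : ∀ m ∈ SL, ∀ p, inc p m → p ∈ SP := by
    intro m hm p hpm
    by_cases hpO : p ∈ O
    · exact hOsub hpO
    obtain ⟨a, b, c, hab, hac, hbc, hpa, hpb, hpc⟩ := hthick.1 p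
    obtain ⟨l', hl'm, hpl'⟩ : ∃ l', l' ≠ m ∧ inc p l' := by
      by_cases h : a = m
      · exact ⟨b, fun hh => hab (h.trans hh.symm), hpb⟩
      · exact ⟨a, h, hpa⟩
    obtain ⟨o', ⟨ho'O, ho'l⟩, _⟩ := hO l'
    have hpo' : p ≠ o' := fun h => hpO (h ▸ ho'O)
    have hno : ¬ inc o' m := fun h => hl'm (huniq_line p o' l' m hpo' hpl' ho'l hpm h)
    exact (projSP o' ho'O m hm hno p hpm ⟨l', ho'l, hpl'⟩).1
  -- Ideality at non-ovoid sub-points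
  have ideal : ∀ x ∈ SP, x ∉ O → ∀ n, inc x n → n ∈ SL := by
    intro x hx hxO n hxn
    obtain ⟨o, ⟨hoO, hon⟩, _⟩ := hO n
    have hxo : x ≠ o := fun h => hxO (h ▸ hoO)
    obtain ⟨m', hxm'⟩ := hsub.2.2.1 ⟨x, hx⟩
    by_cases hom' : inc o m'.1
    · have h := huniq_line x o n m'.1 hxo hxn hon hxm' hom'
      exact h ▸ m'.2
    · obtain ⟨_, n', hn'SL, hon', hxn'⟩ :=
        projSP o hoO m'.1 m'.2 hom' x hxm' ⟨n, hon, hxn⟩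
      have h : n' = n := huniq_line x o n' n hxo hxn' hon' hxn hon
      exact h ▸ hn'SL
  have hSP : SP = Set.univ := by
    ext p
    simp only [Set.mem_univ, iff_true]
    by_cases hpO : p ∈ O
    · exact hOsub hpO
    obtain ⟨l0, hpl0⟩ := hptline p
    obtain ⟨o0, ⟨ho0O, _⟩, _⟩ := hO l0
    obtain ⟨m, _⟩ := hsub.2.2.1 ⟨o0, hOsub ho0O⟩
    by_cases hpM : inc p m.1
    · exact full m.1 m.2 p hpM
    obtain ⟨q, ⟨hqM, n, hpn, hqn⟩, huq⟩ := hproj p m.1 hpM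
    by_cases hqO : q ∈ O
    · -- hard case: the projection of p onto m is the ovoid point of m
      obtain ⟨a, b, c, hab, hac, hbc, hpa, hpb, hpc⟩ := hthick.1 p
      obtain ⟨n', hn'n, hpn'⟩ : ∃ n', n' ≠ n ∧ inc p n' := by
        by_cases h : a = n
        · exact ⟨b, fun hh => hab (h.trans hh.symm), hpb⟩
        · exact ⟨a, h, hpa⟩
      have hpq : p ≠ q := fun h => hpM (h ▸ hqM)
      have hdisj : ∀ v, inc v n' → ¬ inc v m.1 := by
        intro v hvn' hvM
        have hvq : v = q := huq v ⟨hvM, n', hpn', hvn'⟩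
        subst hvq
        exact hn'n (huniq_line p v n' n hpq hpn' hvn' hpn hqn)
      obtain ⟨t1, t2, t3, h12, h13, h23, ht1, ht2, ht3⟩ := hthick.2 n'
      obtain ⟨op, ⟨hopO, hopn'⟩, hopu⟩ := hO n'
      obtain ⟨t, htn', htp, htO⟩ : ∃ t, inc t n' ∧ t ≠ p ∧ t ∉ O := by
        have key : ∀ s, inc s n' → s ∈ O → s = op := fun s hs hsO => hopu s ⟨hsO, hs⟩
        by_cases e1 : t1 ≠ p ∧ t1 ∉ O
        · exact ⟨t1, ht1, e1.1, e1.2⟩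
        by_cases e2 : t2 ≠ p ∧ t2 ∉ O
        · exact ⟨t2, ht2, e2.1, e2.2⟩
        by_cases e3 : t3 ≠ p ∧ t3 ∉ O
        · exact ⟨t3, ht3, e3.1, e3.2⟩
        exfalso
        push_neg at e1 e2 e3
        have k1 : t1 = p ∨ t1 = op := by
          by_cases h : t1 = p
          · exact Or.inl h
          · exact Or.inr (key t1 ht1 (e1 h))
        have k2 : t2 = p ∨ t2 = op := by
          by_cases h : t2 = p
          · exact Or.inl h
          · exact Or.inr (key t2 ht2 (e2 h))
        have k3 : t3 = p ∨ t3 = op := by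
          by_cases h : t3 = p
          · exact Or.inl h
          · exact Or.inr (key t3 ht3 (e3 h))
        rcases k1 with h1 | h1 <;> rcases k2 with h2 | h2 <;> rcases k3 with h3 | h3 <;>
          first
          | exact h12 (h1.trans h2.symm)
          | exact h13 (h1.trans h3.symm)
          | exact h23 (h2.trans h3.symm)
      have htM : ¬ inc t m.1 := hdisj t htn'
      obtain ⟨u, ⟨huM, w, htw, huw⟩, _⟩ := hproj t m.1 htM
      have hqn' : ¬ inc q n' := fun h => hdisj q h hqM
      have huq2 : u ≠ q := by
        intro h
        subst h
        obtain ⟨y, _, hyu⟩ := hproj u n' hqn'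
        have h1 : p = y := hyu p ⟨hpn', n, hqn, hpn⟩
        have h2 : t = y := hyu t ⟨htn', w, huw, htw⟩
        exact htp (h2.trans h1.symm)
      have huO : u ∉ O := by
        intro h
        obtain ⟨opM, _, hopMu⟩ := hO m.1
        exact huq2 ((hopMu u ⟨h, huM⟩).trans (hopMu q ⟨hqO, hqM⟩).symm)
      have huSP : u ∈ SP := full m.1 m.2 u huM
      have hwSL : w ∈ SL := ideal u huSP huO w huw
      have htSP : t ∈ SP := full w hwSL t htw
      have hn'SL : n' ∈ SL := ideal t htSP htO n' htn'
      exact full n' hn'SL p hpn'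
    · have hqSP : q ∈ SP := full m.1 m.2 q hqM
      have hnSL : n ∈ SL := ideal q hqSP hqO n hqn
      exact full n hnSL p hpn
  refine ⟨hSP, ?_⟩
  ext l
  simp only [Set.mem_univ, iff_true]
  obtain ⟨a, b, c, hab, hac, hbc, hal, hbl, hcl⟩ := hthick.2 l
  obtain ⟨op, ⟨hopO, _⟩, hopu⟩ := hO l
  obtain ⟨r, hrl, hrO⟩ : ∃ r, inc r l ∧ r ∉ O := by
    by_cases h : a = op
    · exact ⟨b, hbl, fun hbO => hab (h.trans (hopu b ⟨hbO, hbl⟩).symm)⟩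
    · exact ⟨a, hal, fun haO => h (hopu a ⟨haO, hal⟩)⟩
  exact ideal r (Set.eq_univ_iff_forall.mp hSP r) hrO l hrl
end

section
/- Let S be a thick generalized quadrangle and let S' be a subquadrangle of S that is both full (every point of S on a line of S' belongs to S') and ideal (every line of S through a point of S' belongs to S'). Then S' = S. -/
/-- The subgeometry `(SP, SL)` is ideal: every line of the ambient geometry
through one of its points belongs to it. -/
def IsIdeal {P L : Type} (inc : P → L → Prop) (SP : Set P) (SL : Set L) : Prop :=
  ∀ p ∈ SP, ∀ l, inc p l → l ∈ SL

/-- a (nonempty) full and ideal subquadrangle `S' = (SP, SL)` of a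
thick generalized quadrangle `S` equals `S`. -/
theorem full_ideal_subGQ_is_whole {P L : Type} (inc : P → L → Prop)
    (hGQ : IsGQ inc) (hthick : Thick inc)
    (SP : Set P) (SL : Set L) (hne : SP.Nonempty)
    (hsub : IsGQ (Rinc inc SP SL))
    (hfull : IsFull inc SP SL)
    (hideal : IsIdeal inc SP SL) :
    SP = Set.univ ∧ SL = Set.univ := by
  obtain ⟨p0, hp0⟩ := hne
  obtain ⟨_, hreg, hpl, hlp⟩ := hGQ
  have hP : ∀ x : P, x ∈ SP := by
    intro x
    obtain ⟨l, hxl⟩ := hpl x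
    by_cases h : inc p0 l
    · exact hfull l (hideal p0 hp0 l h) x hxl
    · obtain ⟨y, ⟨hyl, M, hp0M, hyM⟩, _⟩ := hreg p0 l h
      have hy : y ∈ SP := hfull M (hideal p0 hp0 M hp0M) y hyM
      exact hfull l (hideal y hy l hyl) x hxl
  constructor
  · exact Set.eq_univ_of_forall hP
  · apply Set.eq_univ_of_forall
    intro l
    obtain ⟨p, hpl'⟩ := hlp l
    exact hideal p (hP p) l hpl'
end

section
/- Let S' be a proper full subquadrangle of a thick generalized quadrangle S such that every line of S contains at least one point of S'. Then S' is maximal: there is no proper subquadrangle of S properly containing S'. -/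
/-- a proper full subquadrangle `S' = (SP, SL)` of a thick
generalized quadrangle `S` such that every line of `S` contains a point of
`S'` is maximal: there is no proper subquadrangle of `S` properly
containing `S'`. -/
theorem full_hyperplane_subGQ_is_maximal {P L : Type} (inc : P → L → Prop)
    (hGQ : IsGQ inc) (hthick : Thick inc)
    (SP : Set P) (SL : Set L) (hne : SP.Nonempty)
    (hsub : IsGQ (Rinc inc SP SL))
    (hfull : IsFull inc SP SL)
    (hproper : SP ≠ Set.univ ∨ SL ≠ Set.univ)
    (hmeets : ∀ l : L, ∃ p ∈ SP, inc p l) :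
    ∀ TP : Set P, ∀ TL : Set L, IsGQ (Rinc inc TP TL) →
      SP ⊆ TP → SL ⊆ TL → (TP ≠ Set.univ ∨ TL ≠ Set.univ) →
      TP = SP ∧ TL = SL := by

  obtain ⟨hGQ1, hGQ2, hGQ3, hGQ4⟩ := hGQ
  obtain ⟨hthickP, hthickL⟩ := hthick
  obtain ⟨hS1, hS2, hS3, hS4⟩ := hsub
  intro TP TL hT hPT hLT hTproper
  obtain ⟨hT1, hT2, hT3, hT4⟩ := hT
  -- every point of SP lies on a line of SL
  have hSline : ∀ p, p ∈ SP → ∃ m ∈ SL, inc p m := by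
    intro p hp
    obtain ⟨m, hm⟩ := hS3 ⟨p, hp⟩
    exact ⟨m.1, m.2, hm⟩
  -- Lemma A : two distinct collinear points of SP lie on a line of SL
  have lemA : ∀ x ∈ SP, ∀ y ∈ SP, ∀ l, x ≠ y → inc x l → inc y l → l ∈ SL := by
    intro x hx y hy l hxy hxl hyl
    obtain ⟨m, hmSL, hxm⟩ := hSline x hx
    by_cases hym : inc y m
    · have : l = m := hGQ1 x y l m hxy hxl hyl hxm hym
      rw [this]; exact hmSL
    · obtain ⟨y', ⟨hy'm, hcol⟩, -⟩ := hS2 ⟨y, hy⟩ ⟨m, hmSL⟩ hym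
      obtain ⟨M, hyM, hy'M⟩ := hcol
      obtain ⟨z, -, huniq⟩ := hGQ2 y m hym
      have h1 : (y' : P) = z := huniq y'.1 ⟨hy'm, M.1, hyM, hy'M⟩
      have h2 : x = z := huniq x ⟨hxm, l, hyl, hxl⟩
      have hxy' : x = (y' : P) := h2.trans h1.symm
      have hxM : inc x M.1 := by rw [hxy']; exact hy'M
      have hlM : l = M.1 := hGQ1 x y l M.1 hxy hxl hyl hxM hyM
      rw [hlM]; exact M.2
  -- lines outside SL carry at most one point of SP
  have uniqSP : ∀ l, l ∉ SL → ∀ x ∈ SP, ∀ y ∈ SP, inc x l → inc y l → x = y := by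
    intro l hl x hx y hy hxl hyl
    by_contra hxy
    exact hl (lemA x hx y hy l hxy hxl hyl)
  -- T is full
  have Tfull : ∀ l ∈ TL, ∀ z, inc z l → z ∈ TP := by
    intro l hlTL z hzl
    by_cases hzSP : z ∈ SP
    · exact hPT hzSP
    · obtain ⟨l1, l2, l3, h12, h13, h23, hz1, hz2, hz3⟩ := hthickP z
      have hn : ∃ n, n ≠ l ∧ inc z n := by
        by_cases h1 : l1 = l
        · exact ⟨l2, fun h => h12 (h1.trans h.symm), hz2⟩
        · exact ⟨l1, h1, hz1⟩
      obtain ⟨n, hnl, hzn⟩ := hn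
      obtain ⟨q, hqSP, hqn⟩ := hmeets n
      have hqz : q ≠ z := fun h => hzSP (h ▸ hqSP)
      have hql : ¬ inc q l := fun hql => hnl (hGQ1 q z n l hqz hqn hzn hql hzl)
      obtain ⟨y, ⟨hyl, hcol⟩, -⟩ := hT2 ⟨q, hPT hqSP⟩ ⟨l, hlTL⟩ hql
      obtain ⟨k, hqk, hyk⟩ := hcol
      obtain ⟨w, -, huniq⟩ := hGQ2 q l hql
      have h1 : (y : P) = w := huniq y.1 ⟨hyl, k.1, hqk, hyk⟩
      have h2 : z = w := huniq z ⟨hzl, n, hqn, hzn⟩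
      have : z = (y : P) := h2.trans h1.symm
      rw [this]; exact y.2
  -- every line through a point of TP \ SP lies in TL
  have Claim1 : ∀ x ∈ TP, x ∉ SP → ∀ l, inc x l → l ∈ TL := by
    intro x hxTP hxSP l hxl
    obtain ⟨p, hpSP, hpl⟩ := hmeets l
    obtain ⟨m, hmSL, hpm⟩ := hSline p hpSP
    have hxm : ¬ inc x m := fun h => hxSP (hfull m hmSL x h)
    obtain ⟨y, ⟨hym, hcol⟩, -⟩ := hT2 ⟨x, hxTP⟩ ⟨m, hLT hmSL⟩ hxm
    obtain ⟨n, hxn, hyn⟩ := hcol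
    obtain ⟨w, -, huniq⟩ := hGQ2 x m hxm
    have h1 : (y : P) = w := huniq y.1 ⟨hym, n.1, hxn, hyn⟩
    have h2 : p = w := huniq p ⟨hpm, l, hxl, hpl⟩
    have hxp : x ≠ p := fun h => hxSP (h ▸ hpSP)
    have hpn : inc p n.1 := by rw [h2.trans h1.symm]; exact hyn
    have hln : l = n.1 := hGQ1 x p l n.1 hxp hxl hpl hxn hpn
    rw [hln]; exact n.2
  by_cases hcase : ∀ x ∈ TP, x ∈ SP
  · -- no new points: then no new lines either
    have hTL : ∀ l ∈ TL, l ∈ SL := by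
      intro l hlTL
      by_contra hlSL
      obtain ⟨p, hpSP, hpl⟩ := hmeets l
      have hb1 : ∀ q ∈ SP, q ≠ p → Collin inc p q := by
        intro q hqSP hqp
        have hql : ¬ inc q l := fun h => hqp (uniqSP l hlSL q hqSP p hpSP h hpl)
        obtain ⟨y, ⟨hyl, hcol⟩, -⟩ := hT2 ⟨q, hPT hqSP⟩ ⟨l, hlTL⟩ hql
        have hySP : (y : P) ∈ SP := hcase y.1 y.2
        have hyp : (y : P) = p := uniqSP l hlSL y.1 hySP p hpSP hyl hpl
        obtain ⟨k, hqk, hyk⟩ := hcol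
        have hpk : inc p k.1 := by rw [← hyp]; exact hyk
        exact ⟨k.1, hpk, hqk⟩
      obtain ⟨p1, p2, p3, h12, h13, h23, hp1, hp2, hp3⟩ := hthickL l
      have hw : ∃ w, w ≠ p ∧ inc w l := by
        by_cases h1 : p1 = p
        · exact ⟨p2, fun h => h12 (h1.trans h.symm), hp2⟩
        · exact ⟨p1, h1, hp1⟩
      obtain ⟨w, hwp, hwl⟩ := hw
      have hwSP : w ∉ SP := fun h => hwp (uniqSP l hlSL w h p hpSP hwl hpl)
      obtain ⟨l1, l2, l3, g12, g13, g23, hw1, hw2, hw3⟩ := hthickP w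
      have hn : ∃ n, n ≠ l ∧ inc w n := by
        by_cases h1 : l1 = l
        · exact ⟨l2, fun h => g12 (h1.trans h.symm), hw2⟩
        · exact ⟨l1, h1, hw1⟩
      obtain ⟨n, hnl, hwn⟩ := hn
      obtain ⟨q, hqSP, hqn⟩ := hmeets n
      have hqw : q ≠ w := fun h => hwSP (h ▸ hqSP)
      have hpn : ¬ inc p n := fun h => hnl (hGQ1 p w n l (Ne.symm hwp) h hwn hpl hwl)
      have hqp : q ≠ p := fun h => hpn (h ▸ hqn)
      obtain ⟨k, hpk, hqk⟩ := hb1 q hqSP hqp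
      obtain ⟨z, -, huniq⟩ := hGQ2 p n hpn
      have h1 : q = z := huniq q ⟨hqn, k, hpk, hqk⟩
      have h2 : w = z := huniq w ⟨hwn, l, hpl, hwl⟩
      exact hqw (h1.trans h2.symm)
    exact ⟨Set.Subset.antisymm hcase hPT, Set.Subset.antisymm hTL hLT⟩
  · -- there is a new point: then T would be the whole space, contradiction
    exfalso
    push_neg at hcase
    obtain ⟨z0, hz0TP, hz0SP⟩ := hcase
    have Tideal : ∀ x ∈ TP, ∀ l, inc x l → l ∈ TL := by
      intro x hxTP l hxl
      by_cases hxSP : x ∈ SP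
      · by_cases hlSL : l ∈ SL
        · exact hLT hlSL
        · -- find a point of TP \ SP not collinear with x
          have hz1 : ∃ z1, z1 ∈ TP ∧ z1 ∉ SP ∧ ¬ Collin inc x z1 := by
            by_cases hcol : Collin inc x z0
            · obtain ⟨n, hxn, hz0n⟩ := hcol
              have hxz0 : x ≠ z0 := fun h => hz0SP (h ▸ hxSP)
              obtain ⟨l1, l2, l3, g12, g13, g23, h1, h2, h3⟩ := hthickP z0
              have hn' : ∃ n', n' ≠ n ∧ inc z0 n' := by
                by_cases e1 : l1 = n
                · exact ⟨l2, fun h => g12 (e1.trans h.symm), h2⟩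
                · exact ⟨l1, e1, h1⟩
              obtain ⟨n', hn'n, hz0n'⟩ := hn'
              have hn'TL : n' ∈ TL := Claim1 z0 hz0TP hz0SP n' hz0n'
              have hxn' : ¬ inc x n' := fun h => hn'n (hGQ1 x z0 n' n hxz0 h hz0n' hxn hz0n)
              have hn'SL : n' ∉ SL := fun h => hz0SP (hfull n' h z0 hz0n')
              obtain ⟨p1, p2, p3, k12, k13, k23, hq1, hq2, hq3⟩ := hthickL n'
              have pick : ∀ a b : P, inc a n' → inc b n' → a ≠ b → a ≠ z0 → b ≠ z0 →
                  ∃ w', inc w' n' ∧ w' ≠ z0 ∧ w' ∉ SP := by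
                intro a b ha hb hab haz hbz
                by_cases hsa : a ∈ SP
                · exact ⟨b, hb, hbz, fun hsb => hab (uniqSP n' hn'SL a hsa b hsb ha hb)⟩
                · exact ⟨a, ha, haz, hsa⟩
              have hw' : ∃ w', inc w' n' ∧ w' ≠ z0 ∧ w' ∉ SP := by
                by_cases e1 : p1 = z0
                · exact pick p2 p3 hq2 hq3 k23 (fun h => k12 (e1.trans h.symm))
                    (fun h => k13 (e1.trans h.symm))
                · by_cases e2 : p2 = z0
                  · exact pick p1 p3 hq1 hq3 k13 e1 (fun h => k23 (e2.trans h.symm))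
                  · exact pick p1 p2 hq1 hq2 k12 e1 e2
              obtain ⟨w', hw'n', hw'z0, hw'SP⟩ := hw'
              refine ⟨w', Tfull n' hn'TL w' hw'n', hw'SP, ?_⟩
              rintro ⟨M, hxM, hw'M⟩
              obtain ⟨u, -, huniq⟩ := hGQ2 x n' hxn'
              exact hw'z0 ((huniq w' ⟨hw'n', M, hxM, hw'M⟩).trans
                (huniq z0 ⟨hz0n', n, hxn, hz0n⟩).symm)
            · exact ⟨z0, hz0TP, hz0SP, hcol⟩
          obtain ⟨z1, hz1TP, hz1SP, hz1col⟩ := hz1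
          have hz1l : ¬ inc z1 l := fun h => hz1col ⟨l, hxl, h⟩
          obtain ⟨y, ⟨hyl, hcoly⟩, -⟩ := hGQ2 z1 l hz1l
          obtain ⟨k, hz1k, hyk⟩ := hcoly
          have hyx : y ≠ x := fun h => hz1col ⟨k, h ▸ hyk, hz1k⟩
          have hkTL : k ∈ TL := Claim1 z1 hz1TP hz1SP k hz1k
          have hyTP : y ∈ TP := Tfull k hkTL y hyk
          have hySP : y ∉ SP := fun h => hyx (uniqSP l hlSL y h x hxSP hyl hxl)
          exact Claim1 y hyTP hySP l hyl
      · exact Claim1 x hxTP hxSP l hxl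
    obtain ⟨p0, hp0⟩ := hne
    have hTPuniv : ∀ q : P, q ∈ TP := by
      intro q
      by_cases hcol : Collin inc p0 q
      · obtain ⟨k, hp0k, hqk⟩ := hcol
        exact Tfull k (Tideal p0 (hPT hp0) k hp0k) q hqk
      · obtain ⟨n, hqn⟩ := hGQ3 q
        have hp0n : ¬ inc p0 n := fun h => hcol ⟨n, h, hqn⟩
        obtain ⟨y, ⟨hyn, hcoly⟩, -⟩ := hGQ2 p0 n hp0n
        obtain ⟨k, hp0k, hyk⟩ := hcoly
        have hyTP : y ∈ TP := Tfull k (Tideal p0 (hPT hp0) k hp0k) y hyk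
        exact Tfull n (Tideal y hyTP n hyn) q hqn
    rcases hTproper with h | h
    · exact h (Set.eq_univ_of_forall hTPuniv)
    · refine h (Set.eq_univ_of_forall ?_)
      intro l
      obtain ⟨p, hpl⟩ := hGQ4 l
      exact Tideal p (hTPuniv p) l hpl
end

section
/- Let Δ and Δ' be finite thick generalized quadrangles and φ : Δ → Δ' a GQ morphism mapping a geometrical hyperplane G of Δ surjectively onto a geometrical hyperplane G' of Δ' where G' is an ovoid of Δ'. Then φ is surjective. -/
/-- `(SP, SL)` is a geometrical hyperplane: every line of the geometry either
has all its points in `SP` (and is a line of `SL`), or has exactly one point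
in `SP` (and is not a line of `SL`). -/
def IsHyperplane {P L : Type} (inc : P → L → Prop) (SP : Set P) (SL : Set L) : Prop :=
  ∀ l : L, (l ∈ SL ∧ ∀ p, inc p l → p ∈ SP) ∨ (l ∉ SL ∧ ∃! p, inc p l ∧ p ∈ SP)

open Finset

variable {P L : Type}

def CollinIn (inc : P → L → Prop) (B : Set L) (x y : P) : Prop :=
  ∃ m ∈ B, inc x m ∧ inc y m

/-- The axioms of a subquadrangle not inherited from the ambient generalized quadrangle (the axiom
on two lines and the uniqueness of projections are). -/
def IsSubquadrangle (inc : P → L → Prop) (A : Set P) (B : Set L) : Prop :=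
  (∀ x ∈ A, ∃ m ∈ B, inc x m) ∧ (∀ m ∈ B, ∃ x ∈ A, inc x m) ∧
    ∀ x ∈ A, ∀ m ∈ B, ¬ inc x m → ∃ z ∈ A, inc z m ∧ CollinIn inc B x z

open Classical in
noncomputable def pencil [Fintype L] (inc : P → L → Prop) (B : Set L) (x : P) : Finset L :=
  {m | m ∈ B ∧ inc x m}

open Classical in
/-- `x^⊥ \ {x}` in the subgeometry `(A, B)`. -/
noncomputable def perp [Fintype P] (inc : P → L → Prop) (A : Set P) (B : Set L) (x : P) :
    Finset P :=
  {z | z ∈ A ∧ z ≠ x ∧ CollinIn inc B x z}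

variable {inc : P → L → Prop} {A A' : Set P} {B B' : Set L} {O : Finset P}
  {x y z a b o o₀ : P} {l m : L}

theorem Collin.symm (h : Collin inc x y) : Collin inc y x :=
  let ⟨m, hx, hy⟩ := h; ⟨m, hy, hx⟩

theorem CollinIn.collin (h : CollinIn inc B x y) : Collin inc x y :=
  let ⟨m, _, hx, hy⟩ := h; ⟨m, hx, hy⟩

@[simp]
theorem mem_pencil [Fintype L] : m ∈ pencil inc B x ↔ m ∈ B ∧ inc x m := by
  simp [pencil]

@[simp]
theorem mem_perp [Fintype P] : z ∈ perp inc A B x ↔ z ∈ A ∧ z ≠ x ∧ CollinIn inc B x z := by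
  simp [perp]

theorem pencil_mono [Fintype L] (hB : B ⊆ B') : pencil inc B x ⊆ pencil inc B' x :=
  fun _ hm => mem_pencil.2 ⟨hB (mem_pencil.1 hm).1, (mem_pencil.1 hm).2⟩

theorem perp_mono [Fintype P] (hA : A ⊆ A') (hB : B ⊆ B') :
    perp inc A B x ⊆ perp inc A' B' x := by
  intro z hz
  obtain ⟨hzA, hzx, m, hm, hxm, hzm⟩ := mem_perp.1 hz
  exact mem_perp.2 ⟨hA hzA, hzx, m, hB hm, hxm, hzm⟩

namespace Thick

theorem exists_inc_ne_ne (ht : Thick inc) (l : L) (p q : P) :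
    ∃ r, inc r l ∧ r ≠ p ∧ r ≠ q := by
  obtain ⟨r₁, r₂, r₃, h₁₂, h₁₃, h₂₃, h₁, h₂, h₃⟩ := ht.2 l
  rcases eq_or_ne r₁ p with rfl | h₁p
  · rcases eq_or_ne r₂ q with rfl | h₂q
    · exact ⟨r₃, h₃, h₁₃.symm, h₂₃.symm⟩
    · exact ⟨r₂, h₂, h₁₂.symm, h₂q⟩
  · rcases eq_or_ne r₁ q with rfl | h₁q
    · rcases eq_or_ne r₂ p with rfl | h₂p
      · exact ⟨r₃, h₃, h₂₃.symm, h₁₃.symm⟩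
      · exact ⟨r₂, h₂, h₂p, h₁₂.symm⟩
    · exact ⟨r₁, h₁, h₁p, h₁q⟩

theorem exists_inc_ne (ht : Thick inc) (p : P) (l : L) : ∃ m, inc p m ∧ m ≠ l := by
  obtain ⟨m₁, m₂, -, h₁₂, -, -, h₁, h₂, -⟩ := ht.1 p
  by_cases hl : m₁ = l
  · exact ⟨m₂, h₂, hl ▸ h₁₂.symm⟩
  · exact ⟨m₁, h₁, hl⟩

theorem one_lt_card_pencil [Fintype L] (ht : Thick inc) (x : P) :
    1 < #(pencil inc Set.univ x) := by
  obtain ⟨m₁, m₂, -, h₁₂, -, -, h₁, h₂, -⟩ := ht.1 x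
  exact one_lt_card.2 ⟨m₁, mem_pencil.2 ⟨trivial, h₁⟩, m₂, mem_pencil.2 ⟨trivial, h₂⟩, h₁₂⟩

end Thick

namespace IsOvoid

theorem eq_of_inc {O : Set P} (hO : IsOvoid inc O) (ho : x ∈ O) (hy : y ∈ O) (hxl : inc x l)
    (hyl : inc y l) : x = y :=
  (hO l).unique ⟨ho, hxl⟩ ⟨hy, hyl⟩

theorem not_collin {O : Set P} (hO : IsOvoid inc O) (hx : x ∈ O) (hy : y ∈ O) (hxy : x ≠ y) :
    ¬ Collin inc x y :=
  fun ⟨_, hxl, hyl⟩ => hxy (hO.eq_of_inc hx hy hxl hyl)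

open Classical in
theorem card_filter_collin_le [Fintype L] (hO : IsOvoid inc ↑O) (x : P) :
    #{o ∈ O | Collin inc x o} ≤ #(pencil inc Set.univ x) := by
  refine card_le_card_of_forall_subsingleton (fun o m => inc x m ∧ inc o m) (fun o ho => ?_)
    (fun m _ => ?_)
  · obtain ⟨m, hxm, hom⟩ := (mem_filter.1 ho).2
    exact ⟨m, mem_pencil.2 ⟨trivial, hxm⟩, hxm, hom⟩
  · rintro o₁ ⟨ho₁, -, ho₁m⟩ o₂ ⟨ho₂, -, ho₂m⟩
    exact hO.eq_of_inc (mem_filter.1 ho₁).1 (mem_filter.1 ho₂).1 ho₁m ho₂m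

theorem exists_not_collin [Fintype L] (hO : IsOvoid inc ↑O)
    (hlt : #(pencil inc Set.univ x) < #O) : ∃ o ∈ O, ¬ Collin inc x o := by
  classical
  by_contra! H
  have hsub : O ⊆ {o ∈ O | Collin inc x o} := fun o ho => mem_filter.2 ⟨ho, H o ho⟩
  exact ((card_le_card hsub).trans (hO.card_filter_collin_le x)).not_gt hlt

end IsOvoid

namespace IsGQ

theorem line_eq (h : IsGQ inc) (hxy : x ≠ y) (hxl : inc x l) (hyl : inc y l) (hxm : inc x m)
    (hym : inc y m) : l = m :=
  h.1 x y l m hxy hxl hyl hxm hym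

theorem proj_unique (h : IsGQ inc) (hxl : ¬ inc x l) (hyl : inc y l) (hzl : inc z l)
    (hxy : Collin inc x y) (hxz : Collin inc x z) : y = z :=
  (h.2.1 x l hxl).unique ⟨hyl, hxy⟩ ⟨hzl, hxz⟩

theorem isSubquadrangle_univ (h : IsGQ inc) : IsSubquadrangle inc Set.univ Set.univ := by
  refine ⟨fun x _ => ?_, fun m _ => ?_, fun x _ l _ hxl => ?_⟩
  · obtain ⟨m, hxm⟩ := h.2.2.1 x
    exact ⟨m, trivial, hxm⟩
  · obtain ⟨x, hxm⟩ := h.2.2.2 m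
    exact ⟨x, trivial, hxm⟩
  · obtain ⟨z, ⟨hzl, m, hxm, hzm⟩, -⟩ := h.2.1 x l hxl
    exact ⟨z, trivial, hzl, m, trivial, hxm, hzm⟩

theorem isSubquadrangle_range {P' L' : Type} {inc' : P' → L' → Prop} (h : IsGQ inc)
    {fP : P → P'} {fL : L → L'} (hmor : ∀ p l, inc p l → inc' (fP p) (fL l)) :
    IsSubquadrangle inc' (Set.range fP) (Set.range fL) := by
  refine ⟨?_, ?_, ?_⟩
  · rintro _ ⟨p, rfl⟩
    obtain ⟨l, hpl⟩ := h.2.2.1 p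
    exact ⟨fL l, ⟨l, rfl⟩, hmor p l hpl⟩
  · rintro _ ⟨l, rfl⟩
    obtain ⟨p, hpl⟩ := h.2.2.2 l
    exact ⟨fP p, ⟨p, rfl⟩, hmor p l hpl⟩
  · rintro _ ⟨p, rfl⟩ _ ⟨l, rfl⟩ hpl
    obtain ⟨y, ⟨hyl, m, hpm, hym⟩, -⟩ := h.2.1 p l fun hpl' => hpl (hmor p l hpl')
    exact ⟨fP y, ⟨y, rfl⟩, hmor y l hyl, fL m, ⟨m, rfl⟩, hmor p m hpm, hmor y m hym⟩

/-- Projecting the lines through `a` onto `b` is injective. -/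
theorem card_pencil_le_of_not_collin [Fintype L] (h : IsGQ inc) (hS : IsSubquadrangle inc A B)
    (hb : b ∈ A) (hab : ¬ Collin inc a b) : #(pencil inc B a) ≤ #(pencil inc B b) := by
  refine card_le_card_of_forall_subsingleton (fun l m => ∃ z, inc z l ∧ inc z m)
    (fun l hl => ?_) (fun m hm => ?_)
  · obtain ⟨hlB, hal⟩ := mem_pencil.1 hl
    obtain ⟨z, -, hzl, m, hmB, hbm, hzm⟩ := hS.2.2 b hb l hlB fun hbl => hab ⟨l, hal, hbl⟩
    exact ⟨m, mem_pencil.2 ⟨hmB, hbm⟩, z, hzl, hzm⟩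
  · have ham : ¬ inc a m := fun ham => hab ⟨m, ham, (mem_pencil.1 hm).2⟩
    rintro l₁ ⟨hl₁, z₁, hz₁l, hz₁m⟩ l₂ ⟨hl₂, z₂, hz₂l, hz₂m⟩
    have hal₁ := (mem_pencil.1 hl₁).2
    have hal₂ := (mem_pencil.1 hl₂).2
    obtain rfl : z₁ = z₂ := h.proj_unique ham hz₁m hz₂m ⟨l₁, hal₁, hz₁l⟩ ⟨l₂, hal₂, hz₂l⟩
    exact h.line_eq (by rintro rfl; exact ham hz₁m) hz₁l hal₁ hz₂l hal₂

theorem card_pencil_eq_of_not_collin [Fintype L] (h : IsGQ inc) (hS : IsSubquadrangle inc A B)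
    (ha : a ∈ A) (hb : b ∈ A) (hab : ¬ Collin inc a b) :
    #(pencil inc B a) = #(pencil inc B b) :=
  (h.card_pencil_le_of_not_collin hS hb hab).antisymm
    (h.card_pencil_le_of_not_collin hS ha fun hba => hab hba.symm)

/-- Any point off `l` on a line through `r ∈ l` is collinear with no point of `l` but `r`. -/
theorem exists_not_collin (h : IsGQ inc) (ht : Thick inc) (hal : inc a l) (hbl : inc b l) :
    ∃ x, ¬ Collin inc a x ∧ ¬ Collin inc b x := by
  obtain ⟨r, hrl, hra, hrb⟩ := ht.exists_inc_ne_ne l a b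
  obtain ⟨n, hrn, hnl⟩ := ht.exists_inc_ne r l
  obtain ⟨x, hxn, hxr, -⟩ := ht.exists_inc_ne_ne n r r
  have key : ∀ u, inc u l → u ≠ r → ¬ Collin inc u x := by
    intro u hul hur hux
    have hun : ¬ inc u n := fun hun => hnl (h.line_eq hur hun hrn hul hrl)
    exact hxr (h.proj_unique hun hxn hrn hux ⟨l, hul, hrl⟩)
  exact ⟨x, key a hal hra.symm, key b hbl hrb.symm⟩

theorem card_pencil_univ_eq [Fintype L] (h : IsGQ inc) (ht : Thick inc) (a b : P) :
    #(pencil inc Set.univ a) = #(pencil inc Set.univ b) := by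
  have hEq := fun {a b : P} => h.card_pencil_eq_of_not_collin (a := a) (b := b)
    h.isSubquadrangle_univ trivial trivial
  by_cases hab : Collin inc a b
  · obtain ⟨l, hal, hbl⟩ := hab
    obtain ⟨x, hax, hbx⟩ := h.exists_not_collin ht hal hbl
    rw [hEq hax, hEq hbx]
  · exact hEq hab

theorem card_pencil_mul_two_le [Fintype P] [Fintype L] (h : IsGQ inc) (ht : Thick inc) (x : P) :
    #(pencil inc Set.univ x) * 2 ≤ #(perp inc Set.univ Set.univ x) := by
  classical
  refine (card_mul_le_card_mul (n := 1) (fun l z => inc z l) (fun l hl => ?_)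
    (fun z hz => ?_)).trans_eq (mul_one _)
  · have hxl := (mem_pencil.1 hl).2
    have mem : ∀ {z}, inc z l → z ≠ x → z ∈ (perp inc Set.univ Set.univ x).bipartiteAbove
        (fun l z => inc z l) l :=
      fun hzl hzx => (mem_bipartiteAbove _).2 ⟨mem_perp.2 ⟨trivial, hzx, l, trivial, hxl, hzl⟩, hzl⟩
    obtain ⟨z₁, hz₁l, hz₁x, -⟩ := ht.exists_inc_ne_ne l x x
    obtain ⟨z₂, hz₂l, hz₂x, hz₂z₁⟩ := ht.exists_inc_ne_ne l x z₁
    exact one_lt_card.2 ⟨z₁, mem hz₁l hz₁x, z₂, mem hz₂l hz₂x, hz₂z₁.symm⟩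
  · have hzx := (mem_perp.1 hz).2.1
    refine card_le_one.2 fun l₁ hl₁ l₂ hl₂ => ?_
    obtain ⟨hl₁, hzl₁⟩ := (mem_bipartiteBelow _).1 hl₁
    obtain ⟨hl₂, hzl₂⟩ := (mem_bipartiteBelow _).1 hl₂
    exact h.line_eq hzx hzl₁ (mem_pencil.1 hl₁).2 hzl₂ (mem_pencil.1 hl₂).2

/-- `x` is the projection of `a` onto a second line through `x`. -/
theorem mem_of_collin (h : IsGQ inc) (ht : Thick inc) (hS : IsSubquadrangle inc A Set.univ)
    (ha : a ∈ A) (hax : Collin inc a x) : x ∈ A := by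
  obtain ⟨l, hal, hxl⟩ := hax
  rcases eq_or_ne a x with rfl | hax
  · exact ha
  obtain ⟨m, hxm, hml⟩ := ht.exists_inc_ne x l
  have ham : ¬ inc a m := fun ham => hml (h.line_eq hax ham hxm hal hxl)
  obtain ⟨z, hzA, hzm, haz⟩ := hS.2.2 a ha m trivial ham
  rwa [h.proj_unique ham hzm hxm haz.collin ⟨l, hal, hxl⟩] at hzA

end IsGQ

/-- `a e / (e - 1) ≤ t ≤ z ≤ a d / (d - 1)`, and `x ↦ x / (x - 1)` is decreasing. -/
theorem Nat.le_of_mul_le_of_mul_le {a t z d e : ℕ} (ha : 0 < a) (he : 0 < e)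
    (hz : z * (d - 1) ≤ a * d) (ht : a * e ≤ t * (e - 1)) (htz : t ≤ z) : d ≤ e := by
  obtain ⟨f, rfl⟩ : ∃ f, e = f + 1 := ⟨e - 1, by omega⟩
  cases d with
  | zero => exact Nat.zero_le _
  | succ g =>
    rw [Nat.add_sub_cancel] at hz ht
    have key : a * (f + 1) * g ≤ a * (g + 1) * f := calc
      a * (f + 1) * g ≤ t * f * g := Nat.mul_le_mul_right g ht
      _ = t * g * f := by ring
      _ ≤ z * g * f := Nat.mul_le_mul_right f (Nat.mul_le_mul_right g htz)
      _ ≤ a * (g + 1) * f := Nat.mul_le_mul_right f hz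
    have hgf : a * g ≤ a * f := by linarith
    have := Nat.le_of_mul_le_mul_left hgf ha
    omega

namespace IsGQ

variable [Fintype P] [Fintype L] {e : ℕ}

/-- Double counting the pairs `(o, z)` with `o ∈ O \ {o₀}`, `z ∈ perp inc A B o₀` collinear through
a line of `B`: each `z` lies on `e - 1` lines of `B` missing `o₀`, each with its own ovoid point. -/
theorem card_perp_mul_le [DecidableEq P] (h : IsGQ inc) (hO : IsOvoid inc ↑O) (ho₀ : o₀ ∈ O)
    (hOA : ↑O ⊆ A) (he : ∀ x ∈ A, #(pencil inc B x) = e) :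
    #(perp inc A B o₀) * (e - 1) ≤ #(O.erase o₀) * e := by
  classical
  refine card_mul_le_card_mul (fun z o => CollinIn inc B o z) (fun z hz => ?_) (fun o ho => ?_)
  · obtain ⟨hzA, hzo₀, m₀, hm₀, ho₀m₀, hzm₀⟩ := mem_perp.1 hz
    rw [← he z hzA, ← card_erase_of_mem (mem_pencil.2 ⟨hm₀, hzm₀⟩)]
    refine card_le_card_of_forall_subsingleton (fun m o => inc o m) (fun m hm => ?_)
      (fun o ho => ?_)
    · obtain ⟨hmm₀, hm⟩ := mem_erase.1 hm
      obtain ⟨hmB, hzm⟩ := mem_pencil.1 hm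
      obtain ⟨o, hoO, hom⟩ := (hO m).exists
      refine ⟨o, (mem_bipartiteAbove _).2 ⟨mem_erase.2 ⟨?_, hoO⟩, m, hmB, hom, hzm⟩, hom⟩
      rintro rfl
      exact hmm₀ (h.line_eq hzo₀ hzm hom hzm₀ ho₀m₀)
    · have hoz : o ≠ z := by
        rintro rfl
        exact hO.not_collin (mem_erase.1 ((mem_bipartiteAbove _).1 ho).1).2 ho₀ hzo₀
          ⟨m₀, hzm₀, ho₀m₀⟩
      rintro m₁ ⟨hm₁, hom₁⟩ m₂ ⟨hm₂, hom₂⟩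
      exact h.line_eq hoz hom₁ (mem_pencil.1 (mem_erase.1 hm₁).2).2 hom₂
        (mem_pencil.1 (mem_erase.1 hm₂).2).2
  · obtain ⟨hoo₀, hoO⟩ := mem_erase.1 ho
    rw [← he o₀ (hOA ho₀)]
    refine card_le_card_of_forall_subsingleton (fun z l => inc z l) (fun z hz => ?_)
      (fun l hl => ?_)
    · obtain ⟨-, -, m, hm, ho₀m, hzm⟩ := mem_perp.1 ((mem_bipartiteBelow _).1 hz).1
      exact ⟨m, mem_pencil.2 ⟨hm, ho₀m⟩, hzm⟩
    · have hol : ¬ inc o l := fun hol => hoo₀ (hO.eq_of_inc hoO ho₀ hol (mem_pencil.1 hl).2)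
      rintro z₁ ⟨hz₁, hz₁l⟩ z₂ ⟨hz₂, hz₂l⟩
      exact h.proj_unique hol hz₁l hz₂l ((mem_bipartiteBelow _).1 hz₁).2.collin
        ((mem_bipartiteBelow _).1 hz₂).2.collin

/-- The same pairs counted the other way: projecting `o` onto the `e` lines of `B` through `o₀`
gives distinct partners `z`. -/
theorem card_erase_mul_le [DecidableEq P] (h : IsGQ inc) (hS : IsSubquadrangle inc A B)
    (hO : IsOvoid inc ↑O) (ho₀ : o₀ ∈ O) (hOA : ↑O ⊆ A) (he : ∀ x ∈ A, #(pencil inc B x) = e) :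
    #(O.erase o₀) * e ≤ #(perp inc A B o₀) * (e - 1) := by
  classical
  refine card_mul_le_card_mul (CollinIn inc B) (fun o ho => ?_) (fun z hz => ?_)
  · obtain ⟨hoo₀, hoO⟩ := mem_erase.1 ho
    rw [← he o₀ (hOA ho₀)]
    refine card_le_card_of_forall_subsingleton (fun l z => inc z l) (fun l hl => ?_)
      (fun z hz => ?_)
    · obtain ⟨hlB, ho₀l⟩ := mem_pencil.1 hl
      obtain ⟨z, hzA, hzl, hoz⟩ :=
        hS.2.2 o (hOA hoO) l hlB fun hol => hoo₀ (hO.eq_of_inc hoO ho₀ hol ho₀l)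
      have hzo₀ : z ≠ o₀ := by
        rintro rfl
        exact hO.not_collin hoO ho₀ hoo₀ hoz.collin
      exact ⟨z, (mem_bipartiteAbove _).2 ⟨mem_perp.2 ⟨hzA, hzo₀, l, hlB, ho₀l, hzl⟩, hoz⟩, hzl⟩
    · have hzo₀ := (mem_perp.1 ((mem_bipartiteAbove _).1 hz).1).2.1
      rintro l₁ ⟨hl₁, hzl₁⟩ l₂ ⟨hl₂, hzl₂⟩
      exact h.line_eq hzo₀ hzl₁ (mem_pencil.1 hl₁).2 hzl₂ (mem_pencil.1 hl₂).2
  · obtain ⟨hzA, hzo₀, m₀, hm₀, ho₀m₀, hzm₀⟩ := mem_perp.1 hz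
    rw [← he z hzA, ← card_erase_of_mem (mem_pencil.2 ⟨hm₀, hzm₀⟩)]
    refine card_le_card_of_forall_subsingleton (fun o m => inc o m) (fun o ho => ?_)
      (fun m _ => ?_)
    · obtain ⟨ho, m, hm, hom, hzm⟩ := (mem_bipartiteBelow _).1 ho
      obtain ⟨hoo₀, hoO⟩ := mem_erase.1 ho
      refine ⟨m, mem_erase.2 ⟨?_, mem_pencil.2 ⟨hm, hzm⟩⟩, hom⟩
      rintro rfl
      exact hoo₀ (hO.eq_of_inc hoO ho₀ hom ho₀m₀)
    · rintro o₁ ⟨ho₁, ho₁m⟩ o₂ ⟨ho₂, ho₂m⟩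
      exact hO.eq_of_inc (mem_erase.1 ((mem_bipartiteBelow _).1 ho₁).1).2
        (mem_erase.1 ((mem_bipartiteBelow _).1 ho₂).1).2 ho₁m ho₂m

theorem card_pencil_lt_card (h : IsGQ inc) (ht : Thick inc) (hO : IsOvoid inc ↑O) (x : P) :
    #(pencil inc Set.univ x) < #O := by
  classical
  obtain ⟨l, -⟩ := h.2.2.1 x
  obtain ⟨o, ho, -⟩ := (hO l).exists
  rw [h.card_pencil_univ_eq ht x o]
  have hcount :=
    h.card_perp_mul_le hO ho (Set.subset_univ _) fun y _ => h.card_pencil_univ_eq ht y o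
  have hperp := h.card_pencil_mul_two_le ht o
  have hd := ht.one_lt_card_pencil o
  have hcard := card_erase_of_mem ho
  generalize #(pencil inc Set.univ o) = d at hcount hperp hd ⊢
  obtain ⟨g, rfl⟩ : ∃ g, d = g + 1 := ⟨d - 1, by omega⟩
  rw [Nat.add_sub_cancel] at hcount
  have h2g : (g + 1) * (2 * g) ≤ (g + 1) * #(O.erase o) := by nlinarith
  have := Nat.le_of_mul_le_mul_left h2g (Nat.succ_pos g)
  omega

theorem card_pencil_eq_of_mem (h : IsGQ inc) (ht : Thick inc) (hS : IsSubquadrangle inc A B)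
    (hO : IsOvoid inc ↑O) (hOA : ↑O ⊆ A) (hx : x ∈ A) (ho : o ∈ O) :
    #(pencil inc B x) = #(pencil inc B o) := by
  obtain ⟨o', ho', hxo'⟩ := hO.exists_not_collin (h.card_pencil_lt_card ht hO x)
  rw [h.card_pencil_eq_of_not_collin hS hx (hOA ho') hxo']
  rcases eq_or_ne o' o with rfl | hne
  · rfl
  · exact h.card_pencil_eq_of_not_collin hS (hOA ho') (hOA ho) (hO.not_collin ho' ho hne)

theorem card_pencil_univ_le (h : IsGQ inc) (ht : Thick inc) (hS : IsSubquadrangle inc A B)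
    (hO : IsOvoid inc ↑O) (hOA : ↑O ⊆ A) (ho : o ∈ O) :
    #(pencil inc Set.univ o) ≤ #(pencil inc B o) := by
  classical
  have hamb :=
    h.card_perp_mul_le hO ho (Set.subset_univ _) fun y _ => h.card_pencil_univ_eq ht y o
  have himg :=
    h.card_erase_mul_le hS hO ho hOA fun x hx => h.card_pencil_eq_of_mem ht hS hO hOA hx ho
  have hperp :=
    card_le_card (perp_mono (inc := inc) (x := o) (Set.subset_univ A) (Set.subset_univ B))
  obtain ⟨m, hm, hom⟩ := hS.1 o (hOA ho)
  have hO₃ := (ht.one_lt_card_pencil o).trans (h.card_pencil_lt_card ht hO o)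
  refine Nat.le_of_mul_le_of_mul_le (by rw [card_erase_of_mem ho]; omega)
    (card_pos.2 ⟨m, mem_pencil.2 ⟨hm, hom⟩⟩) hamb himg hperp

theorem mem_of_inc_of_mem_ovoid (h : IsGQ inc) (ht : Thick inc) (hS : IsSubquadrangle inc A B)
    (hO : IsOvoid inc ↑O) (hOA : ↑O ⊆ A) (ho : o ∈ O) (hom : inc o m) : m ∈ B := by
  have hpencil : pencil inc B o = pencil inc Set.univ o :=
    eq_of_subset_of_card_le (pencil_mono (Set.subset_univ B))
      (h.card_pencil_univ_le ht hS hO hOA ho)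
  have hm : m ∈ pencil inc B o := hpencil ▸ mem_pencil.2 ⟨Set.mem_univ m, hom⟩
  exact (mem_pencil.1 hm).1

end IsGQ

theorem morphism_onto_ovoid_hyperplane_is_surjective_general
    {P L P' L' : Type} [Fintype P'] [Fintype L']
    (inc : P → L → Prop) (inc' : P' → L' → Prop)
    (hGQ : IsGQ inc)
    (hGQ' : IsGQ inc') (hthick' : Thick inc')
    (fP : P → P') (fL : L → L')
    (hmor : ∀ p l, inc p l → inc' (fP p) (fL l))
    (GP : Set P)
    (GP' : Set P')
    (hovoid : IsOvoid inc' GP')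
    (himP : fP '' GP = GP') :
    Function.Surjective fP ∧ Function.Surjective fL := by
  classical
  have hS := hGQ.isSubquadrangle_range hmor
  have hO : IsOvoid inc' ↑GP'.toFinset := by rwa [Set.coe_toFinset]
  have hOA : ↑GP'.toFinset ⊆ Set.range fP := by
    rw [Set.coe_toFinset, ← himP]
    exact Set.image_subset_range fP GP
  have hfL : Function.Surjective fL := fun m => by
    obtain ⟨o, ho, hom⟩ := (hovoid m).exists
    exact hGQ'.mem_of_inc_of_mem_ovoid hthick' hS hO hOA (Set.mem_toFinset.2 ho) hom
  refine ⟨fun x => ?_, hfL⟩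
  rw [← Set.range_eq_univ] at hfL
  obtain ⟨l, hxl⟩ := hGQ'.2.2.1 x
  obtain ⟨o, ho, hol⟩ := (hovoid l).exists
  exact hGQ'.mem_of_collin hthick' (hfL ▸ hS) (hOA (Set.mem_toFinset.2 ho)) ⟨l, hol, hxl⟩

/-- if `φ = (fP, fL)` is a morphism between finite thick
generalized quadrangles mapping a geometrical hyperplane `G = (GP, GLn)` of
`Δ` surjectively onto a geometrical hyperplane `G' = (GP', GLn')` of `Δ'`
which is of ovoid type (type A), then `φ` is surjective. -/
theorem morphism_onto_ovoid_hyperplane_is_surjective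
    {P L P' L' : Type} [Fintype P] [Fintype L] [Fintype P'] [Fintype L']
    (inc : P → L → Prop) (inc' : P' → L' → Prop)
    (hGQ : IsGQ inc) (hthick : Thick inc)
    (hGQ' : IsGQ inc') (hthick' : Thick inc')
    (fP : P → P') (fL : L → L')
    (hmor : ∀ p l, inc p l → inc' (fP p) (fL l))
    (GP : Set P) (GLn : Set L) (hG : IsHyperplane inc GP GLn)
    (GP' : Set P') (GLn' : Set L') (hG' : IsHyperplane inc' GP' GLn')
    (hGLn' : GLn' = ∅) (hovoid : IsOvoid inc' GP')
    (himP : fP '' GP = GP') (himL : fL '' GLn = GLn') :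
    Function.Surjective fP ∧ Function.Surjective fL :=
  morphism_onto_ovoid_hyperplane_is_surjective_general inc inc' hGQ hGQ' hthick' fP fL hmor GP GP'
    hovoid himP
end
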